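/- Let A, B, C, D be d×d positive semidefinite matrices with operator norms at most 1, and let P, Q be orthogonal projectors. If (1/√d)‖A+B−P‖_F ≤ ε, (1/√d)‖A+C−Q‖_F ≤ ε, and (1/√d)‖A+B+C+D−I‖_F ≤ ε, then (1/√d)‖AB‖_F = O(ε). -/

import Mathlib

/-!
Write `X = A + B - P`, `Y = A + C - Q`, `Z = A + B + C + D - 1`. Then
`1 - A + D = (1 - P) + (1 - Q) - (X + Y - Z)`, so pairing with the positive matrix
`W = A (1 - A) A` splits `‖A - A²‖² = tr (W (1 - A))` into `-tr (W D) ≤ 0`, a term against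
`X + Y - Z`, and terms against the projections `1 - P`, `1 - Q`. The latter are
controlled by the compressions `(1 - P) A (1 - P) ≤ (1 - P) X (1 - P)` and
`(1 - Q) A (1 - Q) ≤ (1 - Q) Y (1 - Q)`, so `‖A - A²‖_F = O(‖X‖_F + ‖Y‖_F + ‖Z‖_F)`; the same
argument for `(B, A, D, C, P, 1 - Q)` gives this for `B`. Hence
`AB + BA = (A - A²) + (B - B²) + X (A + B) - (1 - P) X` is small, and
`2 ‖AB‖_F² ≤ ‖AB + BA‖_F²` since `tr (BABA) ≥ 0`.
-/

open scoped ComplexOrder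

noncomputable def frobNorm {m k : Type*} [Fintype m] [Fintype k] (M : Matrix m k ℂ) : ℝ :=
  Real.sqrt (∑ i, ∑ j, Complex.normSq (M i j))

noncomputable def specNorm {m : Type*} [Fintype m] [DecidableEq m] (M : Matrix m m ℂ) : ℝ :=
  ‖Matrix.toEuclideanCLM (𝕜 := ℂ) M‖

open scoped MatrixOrder Matrix.Norms.L2Operator InnerProductSpace
open Matrix

section Frobenius

variable {m k : Type*}

noncomputable def frobVec (M : Matrix m k ℂ) : EuclideanSpace ℂ (m × k) :=
  WithLp.toLp 2 fun p => M p.1 p.2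

lemma frobVec_add (M N : Matrix m k ℂ) : frobVec (M + N) = frobVec M + frobVec N := rfl

lemma frobVec_sub (M N : Matrix m k ℂ) : frobVec (M - N) = frobVec M - frobVec N := rfl

variable [Fintype m] [Fintype k]

lemma frobNorm_eq_norm_frobVec (M : Matrix m k ℂ) : frobNorm M = ‖frobVec M‖ := by
  simp [EuclideanSpace.norm_eq, frobNorm, Fintype.sum_prod_type, frobVec,
    Complex.normSq_eq_norm_sq]

lemma inner_frobVec (M N : Matrix m k ℂ) : ⟪frobVec M, frobVec N⟫_ℂ = (Mᴴ * N).trace := by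
  simp only [frobVec, PiLp.inner_apply, RCLike.inner_apply, Fintype.sum_prod_type, trace,
    diag_apply, Matrix.mul_apply, conjTranspose_apply, RCLike.star_def, mul_comm]
  exact Finset.sum_comm

lemma frobNorm_nonneg (M : Matrix m k ℂ) : 0 ≤ frobNorm M := Real.sqrt_nonneg _

lemma frobNorm_add_le (M N : Matrix m k ℂ) : frobNorm (M + N) ≤ frobNorm M + frobNorm N := by
  simpa only [frobNorm_eq_norm_frobVec, frobVec_add] using norm_add_le _ _

lemma frobNorm_sub_le (M N : Matrix m k ℂ) : frobNorm (M - N) ≤ frobNorm M + frobNorm N := by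
  simpa only [frobNorm_eq_norm_frobVec, frobVec_sub] using norm_sub_le _ _

lemma frobNorm_sq (M : Matrix m k ℂ) : frobNorm M ^ 2 = (Mᴴ * M).trace.re := by
  rw [frobNorm_eq_norm_frobVec, ← inner_frobVec, ← inner_self_eq_norm_sq (𝕜 := ℂ)]
  rfl

lemma frobNorm_add_sq (M N : Matrix m k ℂ) :
    frobNorm (M + N) ^ 2 = frobNorm M ^ 2 + 2 * (Mᴴ * N).trace.re + frobNorm N ^ 2 := by
  simp only [frobNorm_eq_norm_frobVec, frobVec_add, ← inner_frobVec]
  exact norm_add_sq (𝕜 := ℂ) _ _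

lemma abs_re_trace_le_frobNorm_mul (M N : Matrix m k ℂ) :
    |(Mᴴ * N).trace.re| ≤ frobNorm M * frobNorm N := by
  rw [frobNorm_eq_norm_frobVec, frobNorm_eq_norm_frobVec, ← inner_frobVec]
  exact (Complex.abs_re_le_norm _).trans (norm_inner_le_norm _ _)

lemma frobNorm_conjTranspose (M : Matrix m k ℂ) : frobNorm Mᴴ = frobNorm M := by
  simp only [frobNorm, conjTranspose_apply, Complex.star_def, Complex.normSq_conj]
  rw [Finset.sum_comm]

lemma frobNorm_conjTranspose_mul_mul_sq (X Y : Matrix m m ℂ) (hY : Yᴴ = Y) :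
    frobNorm (Xᴴ * Y * X) ^ 2 = (Y * (X * Xᴴ) * Y * (X * Xᴴ)).trace.re := by
  have hprod : (Xᴴ * Y * X)ᴴ * (Xᴴ * Y * X) = Xᴴ * (Y * (X * Xᴴ) * Y * X) := by
    simp only [conjTranspose_mul, conjTranspose_conjTranspose, hY]
    noncomm_ring
  rw [frobNorm_sq, hprod, trace_mul_comm]
  congr 2
  noncomm_ring

end Frobenius

section Positivity

variable {n : Type*} [Fintype n]

lemma re_trace_mono {M N : Matrix n n ℂ} (h : M ≤ N) : M.trace.re ≤ N.trace.re := by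
  have := (Complex.nonneg_iff.mp (le_iff.mp h).trace_nonneg).1
  rw [trace_sub, Complex.sub_re] at this
  linarith

variable [DecidableEq n]

lemma re_trace_mul_nonneg {M N : Matrix n n ℂ} (hM : M.PosSemidef) (hN : N.PosSemidef) :
    0 ≤ (M * N).trace.re := by
  obtain ⟨X, rfl⟩ := CStarAlgebra.nonneg_iff_eq_star_mul_self.mp hM.nonneg
  rw [star_eq_conjTranspose, Matrix.mul_assoc, trace_mul_comm]
  exact (Complex.nonneg_iff.mp (hN.mul_mul_conjTranspose_same X).trace_nonneg).1

lemma frobNorm_le_of_le {M N : Matrix n n ℂ} (hM : M.PosSemidef) (hMN : M ≤ N) :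
    frobNorm M ≤ frobNorm N := by
  have hsq : frobNorm M ^ 2 ≤ frobNorm M * frobNorm N :=
    calc frobNorm M ^ 2 = (M * M).trace.re := by rw [frobNorm_sq, hM.1.eq]
      _ ≤ (M * M).trace.re + (M * (N - M)).trace.re :=
        le_add_of_nonneg_right (re_trace_mul_nonneg hM (le_iff.mp hMN))
      _ = (Mᴴ * N).trace.re := by
        rw [← Complex.add_re, ← trace_add, ← Matrix.mul_add, hM.1.eq, add_sub_cancel]
      _ ≤ frobNorm M * frobNorm N := (le_abs_self _).trans (abs_re_trace_le_frobNorm_mul _ _)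
  nlinarith [frobNorm_nonneg M, frobNorm_nonneg N]

lemma frobNorm_mul_le_left (M N : Matrix n n ℂ) : frobNorm (M * N) ≤ ‖M‖ * frobNorm N := by
  have hconj : star N * (star M * M) * N ≤ star N * algebraMap ℝ _ (‖M‖ ^ 2) * N :=
    star_left_conjugate_le_conjugate CStarAlgebra.star_mul_le_algebraMap_norm_sq N
  have hsq : frobNorm (M * N) ^ 2 ≤ (‖M‖ * frobNorm N) ^ 2 := by
    have := re_trace_mono hconj
    simp only [star_eq_conjTranspose, Algebra.algebraMap_eq_smul_one] at this
    rw [frobNorm_sq, mul_pow, frobNorm_sq, conjTranspose_mul]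
    convert this using 2
    · noncomm_ring
    · simp [trace_smul, -Complex.ofReal_pow]
  exact (pow_le_pow_iff_left₀ (frobNorm_nonneg _) (mul_nonneg (norm_nonneg _) (frobNorm_nonneg _))
    two_ne_zero).mp hsq

lemma frobNorm_mul_le_right (M N : Matrix n n ℂ) : frobNorm (M * N) ≤ frobNorm M * ‖N‖ := by
  rw [← frobNorm_conjTranspose, conjTranspose_mul, ← frobNorm_conjTranspose M, mul_comm,
    ← l2_opNorm_conjTranspose N]
  exact frobNorm_mul_le_left _ _

end Positivity

section Defect

variable {n : Type*} [Fintype n] [DecidableEq n]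

lemma frobNorm_compression_le {A B P R : Matrix n n ℂ} (hA : A.PosSemidef) (hB : B.PosSemidef)
    (hR : IsStarProjection R) (hRP : R * P = 0) :
    frobNorm (R * A * R) ≤ frobNorm (A + B - P) := by
  have hRs : Rᴴ = R := hR.isSelfAdjoint
  have hRAR : (R * A * R).PosSemidef := by simpa [hRs] using hA.conjTranspose_mul_mul_same R
  have hle : R * A * R ≤ R * (A + B - P) * R := by
    have hdiff : R * (A + B - P) * R - R * A * R = Rᴴ * B * R := by
      rw [hRs, show R * (A + B - P) * R - R * A * R = R * B * R - R * P * R by noncomm_ring,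
        hRP, Matrix.zero_mul, sub_zero]
    rw [le_iff, hdiff]
    exact hB.conjTranspose_mul_mul_same R
  have hR1 : ‖R‖ ≤ 1 := hR.norm_le
  calc frobNorm (R * A * R) ≤ frobNorm (R * (A + B - P) * R) := frobNorm_le_of_le hRAR hle
    _ ≤ ‖R‖ * frobNorm (A + B - P) * ‖R‖ :=
      (frobNorm_mul_le_right _ _).trans (by gcongr; exact frobNorm_mul_le_left _ _)
    _ ≤ frobNorm (A + B - P) := by
      have := frobNorm_nonneg (A + B - P)
      have := mul_le_one₀ hR1 (norm_nonneg R) hR1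
      nlinarith

lemma re_trace_mul_starProjection_le {A R : Matrix n n ℂ} (hA : A.PosSemidef)
    (hR : IsStarProjection R) :
    (A * (1 - A) * A * R).trace.re ≤ frobNorm (A - A * A) * frobNorm (R * A * R) := by
  -- With `A = X Xᴴ`, the trace is the Frobenius pairing of `Xᴴ (1 - A) X` and `Xᴴ R X`,
  -- whose norms are those of `A - A²` and `R A R`.
  obtain ⟨X, hX⟩ := CStarAlgebra.nonneg_iff_eq_mul_star_self.mp hA.nonneg
  rw [star_eq_conjTranspose] at hX
  have hAs : Aᴴ = A := hA.1.eq
  have hRs : Rᴴ = R := hR.isSelfAdjoint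
  have hT : (1 - A)ᴴ = 1 - A := by simp [hAs]
  have hTrace : (A * (1 - A) * A * R).trace = ((Xᴴ * (1 - A) * X)ᴴ * (Xᴴ * R * X)).trace := by
    rw [hX, show X * Xᴴ * (1 - X * Xᴴ) * (X * Xᴴ) * R = X * (Xᴴ * (1 - X * Xᴴ) * X * Xᴴ * R) by
        noncomm_ring, trace_mul_comm]
    simp only [conjTranspose_mul, conjTranspose_conjTranspose, conjTranspose_sub,
      conjTranspose_one]
    congr 1
    noncomm_ring
  have hT' : frobNorm (Xᴴ * (1 - A) * X) = frobNorm (A - A * A) := by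
    rw [← sq_eq_sq₀ (frobNorm_nonneg _) (frobNorm_nonneg _),
      frobNorm_conjTranspose_mul_mul_sq _ _ hT, ← hX, frobNorm_sq]
    simp only [conjTranspose_sub, conjTranspose_mul, hAs]
    congr 2
    noncomm_ring
  have hR' : frobNorm (Xᴴ * R * X) = frobNorm (R * A * R) := by
    rw [← sq_eq_sq₀ (frobNorm_nonneg _) (frobNorm_nonneg _),
      frobNorm_conjTranspose_mul_mul_sq _ _ hRs, ← hX, frobNorm_sq]
    have hRR : R * R = R := hR.isIdempotentElem.eq
    have hprod : (R * A * R)ᴴ * (R * A * R) = R * A * R * A * R := by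
      simp only [conjTranspose_mul, hRs, hAs]
      rw [show R * (A * R) * (R * A * R) = R * A * (R * R) * A * R by noncomm_ring, hRR]
    rw [hprod, trace_mul_comm (R * A * R * A),
      show R * (R * A * R * A) = R * R * A * R * A by noncomm_ring, hRR]
  rw [hTrace, ← hT', ← hR']
  exact (le_abs_self _).trans (abs_re_trace_le_frobNorm_mul _ _)

lemma frobNorm_sub_mul_self_le {A D R₁ R₂ V : Matrix n n ℂ} (hA : A.PosSemidef) (hA1 : ‖A‖ ≤ 1)
    (hD : D.PosSemidef) (hR₁ : IsStarProjection R₁) (hR₂ : IsStarProjection R₂)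
    (h : 1 - A + D = R₁ + R₂ - V) :
    frobNorm (A - A * A) ≤ frobNorm (R₁ * A * R₁) + frobNorm (R₂ * A * R₂) + frobNorm V := by
  set W := A * (1 - A) * A with hW_def
  have hW : W.PosSemidef := by
    have h1A : (1 - A).PosSemidef :=
      le_iff.mp ((CStarAlgebra.norm_le_one_iff_of_nonneg A hA.nonneg).mp hA1)
    simpa [hA.1.eq] using h1A.conjTranspose_mul_mul_same A
  have hsplit : frobNorm (A - A * A) ^ 2 =
      (W * R₁).trace.re + (W * R₂).trace.re - (W * V).trace.re - (W * D).trace.re := by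
    have hprod : (A - A * A)ᴴ * (A - A * A) = W * (1 - A + D) - W * D := by
      rw [conjTranspose_sub, conjTranspose_mul, hA.1.eq, hW_def]
      noncomm_ring
    rw [frobNorm_sq, hprod, h]
    simp only [Matrix.mul_sub, Matrix.mul_add, trace_add, trace_sub, Complex.add_re,
      Complex.sub_re]
  have hWV : -(W * V).trace.re ≤ frobNorm (A - A * A) * frobNorm V := by
    have hWA : frobNorm W ≤ frobNorm (A - A * A) := by
      rw [show W = A * (A - A * A) by rw [hW_def]; noncomm_ring]
      exact (frobNorm_mul_le_left _ _).trans (mul_le_of_le_one_left (frobNorm_nonneg _) hA1)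
    have := abs_re_trace_le_frobNorm_mul W V
    rw [hW.1.eq] at this
    nlinarith [neg_abs_le (W * V).trace.re, frobNorm_nonneg V]
  have h₁ := re_trace_mul_starProjection_le hA hR₁
  have h₂ := re_trace_mul_starProjection_le hA hR₂
  have hWD := re_trace_mul_nonneg hW hD
  nlinarith [frobNorm_nonneg (A - A * A), frobNorm_nonneg (R₁ * A * R₁),
    frobNorm_nonneg (R₂ * A * R₂), frobNorm_nonneg V]

lemma frobNorm_sub_mul_self_le_of_approx {A B C D P Q : Matrix n n ℂ} (hA : A.PosSemidef)
    (hB : B.PosSemidef) (hC : C.PosSemidef) (hD : D.PosSemidef) (hA1 : ‖A‖ ≤ 1)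
    (hP : IsStarProjection P) (hQ : IsStarProjection Q) :
    frobNorm (A - A * A) ≤ frobNorm (A + B - P) + frobNorm (A + C - Q) +
      frobNorm ((A + B - P) + (A + C - Q) - (A + B + C + D - 1)) := by
  have hsplit : 1 - A + D =
      (1 - P) + (1 - Q) - ((A + B - P) + (A + C - Q) - (A + B + C + D - 1)) := by
    abel
  have := frobNorm_sub_mul_self_le hA hA1 hD hP.one_sub hQ.one_sub hsplit
  have := frobNorm_compression_le hA hB hP.one_sub hP.one_sub_mul_self
  have := frobNorm_compression_le hA hC hQ.one_sub hQ.one_sub_mul_self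
  linarith

end Defect

section Anticommutator

variable {n : Type*} [Fintype n] [DecidableEq n]

lemma frobNorm_anticomm_le {A B P : Matrix n n ℂ} (hA1 : ‖A‖ ≤ 1) (hB1 : ‖B‖ ≤ 1)
    (hP : IsStarProjection P) :
    frobNorm (A * B + B * A) ≤
      frobNorm (A - A * A) + frobNorm (B - B * B) + 3 * frobNorm (A + B - P) := by
  have hid : A * B + B * A =
      (A - A * A) + (B - B * B) + (A + B - P) * (A + B) - (1 - P) * (A + B - P) := by
    have h : A * B + B * A = (A - A * A) + (B - B * B) + (A + B - P) * (A + B)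
        - (1 - P) * (A + B - P) + (P * P - P) := by noncomm_ring
    rwa [hP.isIdempotentElem.eq, sub_self, add_zero] at h
  have hXAB : frobNorm ((A + B - P) * (A + B)) ≤ 2 * frobNorm (A + B - P) :=
    (frobNorm_mul_le_right _ _).trans (by
      have := (norm_add_le A B).trans (add_le_add hA1 hB1)
      nlinarith [frobNorm_nonneg (A + B - P)])
  have hPX : frobNorm ((1 - P) * (A + B - P)) ≤ frobNorm (A + B - P) :=
    (frobNorm_mul_le_left _ _).trans (mul_le_of_le_one_left (frobNorm_nonneg _) hP.one_sub.norm_le)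
  rw [hid]
  have := frobNorm_sub_le ((A - A * A) + (B - B * B) + (A + B - P) * (A + B))
    ((1 - P) * (A + B - P))
  have := frobNorm_add_le ((A - A * A) + (B - B * B)) ((A + B - P) * (A + B))
  have := frobNorm_add_le (A - A * A) (B - B * B)
  linarith

lemma two_mul_frobNorm_mul_sq_le {A B : Matrix n n ℂ} (hA : A.PosSemidef) (hB : B.PosSemidef) :
    2 * frobNorm (A * B) ^ 2 ≤ frobNorm (A * B + B * A) ^ 2 := by
  have hAB : (A * B)ᴴ = B * A := by rw [conjTranspose_mul, hA.1.eq, hB.1.eq]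
  have hBA : frobNorm (B * A) = frobNorm (A * B) := by rw [← hAB, frobNorm_conjTranspose]
  have hcross : 0 ≤ ((A * B)ᴴ * (B * A)).trace.re := by
    have hABA : (A * B * A).PosSemidef := by simpa [hA.1.eq] using hB.conjTranspose_mul_mul_same A
    rw [hAB, show B * A * (B * A) = B * (A * B * A) by noncomm_ring]
    exact re_trace_mul_nonneg hB hABA
  rw [frobNorm_add_sq, hBA]
  linarith

end Anticommutator

lemma frobNorm_mul_le_of_approx {n : Type*} [Fintype n] [DecidableEq n] {e : ℝ}
    {A B C D P Q : Matrix n n ℂ} (hA : A.PosSemidef) (hB : B.PosSemidef) (hC : C.PosSemidef)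
    (hD : D.PosSemidef) (hA1 : ‖A‖ ≤ 1) (hB1 : ‖B‖ ≤ 1)
    (hP : IsStarProjection P) (hQ : IsStarProjection Q)
    (hX : frobNorm (A + B - P) ≤ e) (hY : frobNorm (A + C - Q) ≤ e)
    (hZ : frobNorm (A + B + C + D - 1) ≤ e) :
    frobNorm (A * B) ≤ 10 * e := by
  have hAA : frobNorm (A - A * A) ≤ 5 * e := by
    have := frobNorm_sub_mul_self_le_of_approx hA hB hC hD hA1 hP hQ
    have := frobNorm_sub_le (A + B - P + (A + C - Q)) (A + B + C + D - 1)
    have := frobNorm_add_le (A + B - P) (A + C - Q)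
    linarith
  have hBB : frobNorm (B - B * B) ≤ 5 * e := by
    have h := frobNorm_sub_mul_self_le_of_approx hB hA hD hC hB1 hP hQ.one_sub
    rw [show B + A + D + C - 1 = A + B + C + D - 1 by abel, show B + A - P = A + B - P by abel,
      show B + D - (1 - Q) = (A + B + C + D - 1) - (A + C - Q) by abel,
      show A + B - P + (A + B + C + D - 1 - (A + C - Q)) - (A + B + C + D - 1) =
        (A + B - P) - (A + C - Q) by abel] at h
    have := frobNorm_sub_le (A + B + C + D - 1) (A + C - Q)
    have := frobNorm_sub_le (A + B - P) (A + C - Q)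
    linarith
  have hanti := frobNorm_anticomm_le hA1 hB1 hP
  have hsq := two_mul_frobNorm_mul_sq_le hA hB
  have he : 0 ≤ e := (frobNorm_nonneg _).trans hX
  have : frobNorm (A * B + B * A) ≤ 13 * e := by linarith
  have := frobNorm_nonneg (A * B)
  nlinarith [frobNorm_nonneg (A * B + B * A)]

theorem stmt6 :
    ∃ Cst : ℝ, 0 < Cst ∧
      ∀ (d : ℕ) (_ : 0 < d) (ε : ℝ) (A B C D P Q : Matrix (Fin d) (Fin d) ℂ),
        A.PosSemidef → B.PosSemidef → C.PosSemidef → D.PosSemidef →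
        specNorm A ≤ 1 → specNorm B ≤ 1 → specNorm C ≤ 1 → specNorm D ≤ 1 →
        P.IsHermitian → P * P = P → Q.IsHermitian → Q * Q = Q →
        frobNorm (A + B - P) / Real.sqrt d ≤ ε →
        frobNorm (A + C - Q) / Real.sqrt d ≤ ε →
        frobNorm (A + B + C + D - 1) / Real.sqrt d ≤ ε →
        frobNorm (A * B) / Real.sqrt d ≤ Cst * ε := by
  refine ⟨10, by norm_num, fun d hd ε A B C D P Q hA hB hC hD hA1 hB1 _ _ hPh hPP hQh hQQ
    hX hY hZ => ?_⟩
  have hsd : 0 < Real.sqrt d := Real.sqrt_pos.mpr (Nat.cast_pos.mpr hd)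
  rw [div_le_iff₀ hsd] at hX hY hZ ⊢
  have := frobNorm_mul_le_of_approx hA hB hC hD hA1 hB1 ⟨hPP, hPh⟩ ⟨hQQ, hQh⟩ hX hY hZ
  linarith
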